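/- Let k, ℓ ≥ 0, let G_{k,ℓ} = H_1 × ⋯ × H_k × Z_2^ℓ where each H_i is the dihedral group of order 8 generated by a_i of order 4 and involution b_i with b_i a_i b_i = a_i^{-1}, and let Ω_{k,ℓ} = {a_i², b_i, a_i b_i (1 ≤ i ≤ k)} ∪ {c_1,…,c_ℓ}. In the Cayley graph Γ_{k,ℓ} = Cay(G_{k,ℓ}, Ω_{k,ℓ}), if u and w are two distinct neighbors of a vertex v having v as their unique common neighbor, then {u, w} = {b_i v, a_i b_i v} for some 1 ≤ i ≤ k. -/

import Mathlib

/-- The Cayley graph of a group with respect to a connection set `S`. -/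
def cayley {G : Type*} [Group G] (S : Set G) : SimpleGraph G :=
  SimpleGraph.fromRel (fun x y => ∃ s ∈ S, y = s * x)

/-- The group `G_{k,ℓ} = H_1 × ⋯ × H_k × Z_2^ℓ` with `H_i` dihedral of order 8. -/
abbrev GN (k l : ℕ) := (Fin k → DihedralGroup 4) × (Fin l → Multiplicative (ZMod 2))

def aGen (k l : ℕ) (i : Fin k) : GN k l := (Pi.mulSingle i (DihedralGroup.r 1), 1)

def bGen (k l : ℕ) (i : Fin k) : GN k l := (Pi.mulSingle i (DihedralGroup.sr 0), 1)

def cGen (k l : ℕ) (j : Fin l) : GN k l :=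
  (1, Pi.mulSingle j (Multiplicative.ofAdd (1 : ZMod 2)))

/-- The connection set `Ω_{k,ℓ} = {a_i², b_i, a_i b_i (1 ≤ i ≤ k)} ∪ {c_1, …, c_ℓ}`. -/
def OmegaN (k l : ℕ) : Set (GN k l) :=
  {x | (∃ i, x = (aGen k l i) ^ 2 ∨ x = bGen k l i ∨ x = aGen k l i * bGen k l i) ∨
    ∃ j, x = cGen k l j}

/-!
Every element of `Ω` is an involution, so `u = s v` and `w = t v` with `s ≠ t` in `Ω`. If `s` and
`t` commuted, `t s v` would be a second common neighbour of `u` and `w`. Inside `Ω`, however, only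
the pairs `{b_i, a_i b_i}` fail to commute: the `c_j` are central, different factors commute, and
`a_i²` is central in `H_i`.
-/

section Cayley

variable {G : Type*} [Group G] {S : Set G}

theorem cayley_adj_iff (hS : ∀ s ∈ S, s * s = 1) {x y : G} :
    (cayley S).Adj x y ↔ x ≠ y ∧ ∃ s ∈ S, y = s * x := by
  rw [cayley, SimpleGraph.fromRel_adj]
  refine and_congr_right fun _ => or_iff_left_of_imp ?_
  rintro ⟨s, hs, rfl⟩
  exact ⟨s, hs, by rw [← mul_assoc, hS s hs, one_mul]⟩

theorem cayley_adj_mul (h1 : (1 : G) ∉ S) {s : G} (hs : s ∈ S) (x : G) :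
    (cayley S).Adj x (s * x) := by
  refine (SimpleGraph.fromRel_adj _ _ _).2 ⟨?_, .inl ⟨s, hs, rfl⟩⟩
  rw [Ne, eq_comm, mul_eq_right]
  rintro rfl
  exact h1 hs

theorem not_commute_of_unique_common_neighbor (hS : ∀ s ∈ S, s * s = 1) (h1 : (1 : G) ∉ S)
    {v s t : G} (hs : s ∈ S) (ht : t ∈ S) (hst : s ≠ t)
    (huniq : ∀ z, (cayley S).Adj z (s * v) → (cayley S).Adj z (t * v) → z = v) :
    ¬Commute s t := by
  intro hcomm
  have hadj_s : (cayley S).Adj (t * s * v) (s * v) := by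
    rw [mul_assoc]
    exact (cayley_adj_mul h1 ht _).symm
  have hadj_t : (cayley S).Adj (t * s * v) (t * v) := by
    rw [← hcomm.eq, mul_assoc]
    exact (cayley_adj_mul h1 hs _).symm
  have hts : t * s = 1 := mul_eq_right.1 (huniq _ hadj_s hadj_t)
  exact hst ((inv_eq_of_mul_eq_one_left (hS s hs)).symm.trans (inv_eq_of_mul_eq_one_left hts))

end Cayley

namespace GN

open DihedralGroup

variable {k l : ℕ}

def embed (i : Fin k) : DihedralGroup 4 →* GN k l :=
  (MonoidHom.inl _ _).comp (MonoidHom.mulSingle (fun _ => DihedralGroup 4) i)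

theorem embed_injective (i : Fin k) : Function.Injective (embed (l := l) i) :=
  fun _ _ h => Pi.mulSingle_injective i (congrArg Prod.fst h)

theorem aGen_mul_bGen (i : Fin k) : aGen k l i * bGen k l i = embed i (sr 3) := by
  rw [aGen, bGen, embed, Prod.mk_mul_mk, ← Pi.mulSingle_mul, mul_one]
  rfl

theorem aGen_sq (i : Fin k) : aGen k l i ^ 2 = embed i (r 2) := by
  rw [aGen, sq, embed, Prod.mk_mul_mk, ← Pi.mulSingle_mul, mul_one]
  rfl

/-- The images in `D₄` of `a_i²`, `b_i` and `a_i b_i`. -/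
def dihedralGens : Finset (DihedralGroup 4) := {r 2, sr 0, sr 3}

theorem mem_OmegaN {s : GN k l} (hs : s ∈ OmegaN k l) :
    (∃ i, ∃ g ∈ dihedralGens, s = embed i g) ∨ ∃ j, s = cGen k l j := by
  rcases hs with ⟨i, rfl | rfl | rfl⟩ | hc
  · exact .inl ⟨i, r 2, by decide, aGen_sq i⟩
  · exact .inl ⟨i, sr 0, by decide, rfl⟩
  · exact .inl ⟨i, sr 3, by decide, aGen_mul_bGen i⟩
  · exact .inr hc

theorem cGen_mul_self (j : Fin l) : cGen k l j * cGen k l j = 1 := by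
  rw [cGen, Prod.mk_mul_mk, ← Pi.mulSingle_mul, mul_one]
  exact Prod.ext rfl (Pi.mulSingle_eq_one_iff.2 (by decide))

theorem cGen_ne_one (j : Fin l) : cGen k l j ≠ 1 := fun h =>
  absurd (Pi.mulSingle_eq_one_iff.1 (congrArg Prod.snd h)) (by decide)

theorem mul_self_of_mem_OmegaN : ∀ s ∈ OmegaN k l, s * s = 1 := by
  intro s hs
  rcases mem_OmegaN hs with ⟨i, g, hg, rfl⟩ | ⟨j, rfl⟩
  · have hgg : g * g = 1 := (by decide : ∀ g ∈ dihedralGens, g * g = 1) g hg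
    rw [← map_mul, hgg, map_one]
  · exact cGen_mul_self j

theorem one_notMem_OmegaN : (1 : GN k l) ∉ OmegaN k l := by
  intro h
  rcases mem_OmegaN h with ⟨i, g, hg, h1⟩ | ⟨j, h1⟩
  · have hg1 : g = 1 := embed_injective i (h1.symm.trans (map_one _).symm)
    subst hg1
    exact absurd hg (by decide)
  · exact cGen_ne_one j h1.symm

theorem commute_cGen (j : Fin l) (x : GN k l) : Commute (cGen k l j) x :=
  Prod.ext (one_mul _ |>.trans (mul_one _).symm) (mul_comm _ _)

theorem commute_embed_of_ne {i i' : Fin k} (hii' : i ≠ i') (g g' : DihedralGroup 4) :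
    Commute (embed (l := l) i g) (embed i' g') :=
  (Pi.mulSingle_commute (f := fun _ => DihedralGroup 4) hii' g g').map (MonoidHom.inl _ _)

theorem eq_of_not_commute_of_mem_dihedralGens :
    ∀ g ∈ dihedralGens, ∀ g' ∈ dihedralGens, ¬Commute g g' →
      g = sr 0 ∧ g' = sr 3 ∨ g = sr 3 ∧ g' = sr 0 := by
  unfold Commute SemiconjBy
  decide

theorem eq_of_not_commute_of_mem_OmegaN {s t : GN k l} (hs : s ∈ OmegaN k l)
    (ht : t ∈ OmegaN k l) (hst : ¬Commute s t) :
    ∃ i, s = bGen k l i ∧ t = aGen k l i * bGen k l i ∨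
      s = aGen k l i * bGen k l i ∧ t = bGen k l i := by
  rcases mem_OmegaN hs with ⟨i, g, hg, rfl⟩ | ⟨j, rfl⟩
  swap
  · exact absurd (commute_cGen j t) hst
  rcases mem_OmegaN ht with ⟨i', g', hg', rfl⟩ | ⟨j, rfl⟩
  swap
  · exact absurd (commute_cGen j _).symm hst
  obtain rfl : i = i' := by
    by_contra hii'
    exact hst (commute_embed_of_ne hii' g g')
  have hgg' : ¬Commute g g' := fun h => hst (h.map _)
  refine ⟨i, ?_⟩
  rw [aGen_mul_bGen]
  rcases eq_of_not_commute_of_mem_dihedralGens g hg g' hg' hgg' with ⟨rfl, rfl⟩ | ⟨rfl, rfl⟩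
  exacts [.inl ⟨rfl, rfl⟩, .inr ⟨rfl, rfl⟩]

end GN

open GN in
theorem unique_common_neighbor (k l : ℕ) (v u w : GN k l) (huw : u ≠ w)
    (hu : (cayley (OmegaN k l)).Adj v u) (hw : (cayley (OmegaN k l)).Adj v w)
    (huniq : ∀ z, (cayley (OmegaN k l)).Adj z u → (cayley (OmegaN k l)).Adj z w → z = v) :
    ∃ i : Fin k,
      (u = bGen k l i * v ∧ w = aGen k l i * bGen k l i * v) ∨
      (u = aGen k l i * bGen k l i * v ∧ w = bGen k l i * v) := by
  obtain ⟨-, s, hs, rfl⟩ := (cayley_adj_iff mul_self_of_mem_OmegaN).1 hu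
  obtain ⟨-, t, ht, rfl⟩ := (cayley_adj_iff mul_self_of_mem_OmegaN).1 hw
  have hst : s ≠ t := by
    rintro rfl
    exact huw rfl
  have hnc := not_commute_of_unique_common_neighbor mul_self_of_mem_OmegaN one_notMem_OmegaN
    hs ht hst huniq
  obtain ⟨i, ⟨rfl, rfl⟩ | ⟨rfl, rfl⟩⟩ := eq_of_not_commute_of_mem_OmegaN hs ht hnc
  exacts [⟨i, .inl ⟨rfl, rfl⟩⟩, ⟨i, .inr ⟨rfl, rfl⟩⟩]
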